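/- arXiv:2312.06996 — 3 statements merged into one kernel-verified Lean document; each statement's English description precedes it below -/
import Mathlib

section
/- Let R be a commutative Noetherian local ring, and let 0 → M^{⊕a} → K → Ω^n M^{⊕b} → 0 be a short exact sequence of finitely generated R-modules, where a,b ≥ 1, n ≥ 0, and Ω^n M denotes an n-th syzygy of M. If depth_R(M) ≤ depth(R), then depth_R(M) = depth_R(K). -/
open CategoryTheory

/-- The residue field of a local ring, as an object of `ModuleCat R`. -/
noncomputable abbrev resFld (R : Type) [CommRing R] [IsLocalRing R] : ModuleCat.{0} R :=
  ModuleCat.of R (IsLocalRing.ResidueField R)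

/-- The depth of a module over a Noetherian local ring, defined (following Rees) as the
infimum of the set of `n` with `Ext^n_R(k, M) ≠ 0`; it is `⊤` if no such `n` exists
(e.g. for `M = 0`, matching the convention `depth 0 = ∞`). -/
noncomputable def mdepth (R : Type) [CommRing R] [IsLocalRing R]
    (M : Type) [AddCommGroup M] [Module R M] : ℕ∞ :=
  sInf {e : ℕ∞ | ∃ n : ℕ, e = (n : ℕ∞) ∧
    Nontrivial (((Ext R (ModuleCat.{0} R) n).obj (Opposite.op (resFld R))).obj (ModuleCat.of R M))}
/-- `S` is a (first) syzygy of `M`: there is an exact sequence `0 → S → R^m → M → 0`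
with `R^m` finite free. -/
def IsSyzygyOf (R : Type) [CommRing R] (S M : ModuleCat.{0} R) : Prop :=
  ∃ (m : ℕ) (f : S ⟶ ModuleCat.of R (Fin m → R)) (g : ModuleCat.of R (Fin m → R) ⟶ M),
    Function.Injective f ∧ Function.Surjective g ∧ ∀ y, (∃ x, f x = y) ↔ g y = 0

/-- `S` is an `n`-th syzygy of `M` (with `Ω⁰ M = M`). -/
def IsNthSyzygyOf (R : Type) [CommRing R] : ℕ → ModuleCat.{0} R → ModuleCat.{0} R → Prop
  | 0, S, M => Nonempty (S ≅ M)
  | n + 1, S, M => ∃ T : ModuleCat.{0} R, IsNthSyzygyOf R n T M ∧ IsSyzygyOf R S T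


section DepthAux
open CategoryTheory Limits HomologicalComplex

variable {R : Type} [CommRing R]

noncomputable def mapCC (P : ChainComplex (ModuleCat.{0} R) ℕ) {A B : ModuleCat.{0} R}
    (φ : A ⟶ B) : P.linearYonedaObj R A ⟶ P.linearYonedaObj R B where
  f i := ModuleCat.ofHom (Linear.rightComp R (P.X i) φ)
  comm' i j hij := by
    ext u
    show Linear.leftComp R B (P.d j i) (Linear.rightComp R (P.X i) φ u) = Linear.rightComp R (P.X j) φ (Linear.leftComp R A (P.d j i) u)
    simp
    exact (Category.assoc _ _ _).symm


lemma hom_ses {N₁ N₂ N₃ : ModuleCat.{0} R} (Q : Type) [AddCommGroup Q] [Module R Q]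
    (hQ : Module.Projective R Q) (f : N₁ ⟶ N₂) (g : N₂ ⟶ N₃)
    (hf : Function.Injective f) (hg : Function.Surjective g)
    (hfg : ∀ y, (∃ x, f x = y) ↔ g y = 0)
    (h0 : ModuleCat.ofHom (Linear.rightComp R (ModuleCat.of R Q) f) ≫
      ModuleCat.ofHom (Linear.rightComp R (ModuleCat.of R Q) g) = 0) :
    (ShortComplex.mk (X₁ := ModuleCat.of R (ModuleCat.of R Q ⟶ N₁))
      (X₂ := ModuleCat.of R (ModuleCat.of R Q ⟶ N₂))
      (X₃ := ModuleCat.of R (ModuleCat.of R Q ⟶ N₃))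
      (ModuleCat.ofHom (Linear.rightComp R (ModuleCat.of R Q) f))
      (ModuleCat.ofHom (Linear.rightComp R (ModuleCat.of R Q) g)) h0).ShortExact := by
  refine { exact := ?_, mono_f := ?_, epi_g := ?_ }
  · rw [ShortComplex.moduleCat_exact_iff]
    intro (u : ModuleCat.of R Q ⟶ N₂) hu
    have hu' : ∀ x, g (u x) = 0 := by
      intro x
      exact DFunLike.congr_fun (congrArg (fun (w : ModuleCat.of R Q ⟶ N₃) => w.hom) hu) x
    have hmem : ∀ x, ∃ a, f a = u x := fun x => (hfg (u x)).2 (hu' x)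
    let e := LinearEquiv.ofInjective f.hom hf
    refine ⟨ModuleCat.ofHom (e.symm.toLinearMap ∘ₗ (u.hom.codRestrict
      (LinearMap.range f.hom) (fun x => by
        rw [LinearMap.mem_range]; exact hmem x))), ?_⟩
    have key : ∀ y : LinearMap.range f.hom, f (e.symm y) = (y : N₂) := by
      intro y
      conv_rhs => rw [← e.apply_symm_apply y]
      rfl
    show Linear.rightComp R _ f _ = u
    refine ModuleCat.hom_ext (LinearMap.ext fun x => ?_)
    show f (e.symm ⟨u x, _⟩) = u x
    exact key _
  · rw [ModuleCat.mono_iff_injective]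
    intro u₁ u₂ h
    refine ModuleCat.hom_ext (LinearMap.ext fun x => ?_)
    exact hf (DFunLike.congr_fun (congrArg (fun (w : ModuleCat.of R Q ⟶ N₂) => w.hom) h) x)
  · rw [ModuleCat.epi_iff_surjective]
    intro (w : ModuleCat.of R Q ⟶ N₃)
    obtain ⟨h, hh⟩ := Module.projective_lifting_property (h := hQ) g.hom w.hom hg
    exact ⟨ModuleCat.ofHom h, ModuleCat.hom_ext hh⟩


lemma exact_nt₂ {S : ShortComplex (ModuleCat.{0} R)} (hS : S.Exact)
    (h2 : Nontrivial S.X₂) : Nontrivial S.X₁ ∨ Nontrivial S.X₃ := by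
  by_contra hc
  push_neg at hc
  obtain ⟨h1, h3⟩ := hc
  rw [ShortComplex.moduleCat_exact_iff] at hS
  obtain ⟨a, b, hab⟩ := h2
  apply hab
  have key : ∀ x : S.X₂, x = 0 := by
    intro x
    obtain ⟨x₁, hx₁⟩ := hS x (Subsingleton.elim _ _)
    rw [← hx₁, Subsingleton.elim x₁ 0, map_zero]
  rw [key a, key b]

lemma nontrivial_of_injective {X Y : ModuleCat.{0} R} (w : X ⟶ Y)
    (hw : Function.Injective w) (h : Nontrivial X) : Nontrivial Y := by
  obtain ⟨a, b, hab⟩ := h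
  exact ⟨w a, w b, fun h' => hab (hw h')⟩

variable [IsLocalRing R]

noncomputable abbrev EE (R : Type) [CommRing R] [IsLocalRing R] (j : ℕ) (N : ModuleCat.{0} R) :
    ModuleCat.{0} R :=
  ((Ext R (ModuleCat.{0} R) j).obj (Opposite.op (resFld R))).obj N

lemma les (N₁ N₂ N₃ : ModuleCat.{0} R) (f : N₁ ⟶ N₂) (g : N₂ ⟶ N₃)
    (hf : Function.Injective f) (hg : Function.Surjective g)
    (hfg : ∀ y, (∃ x, f x = y) ↔ g y = 0) :
    (∀ j, Nontrivial (EE R j N₂) → Nontrivial (EE R j N₁) ∨ Nontrivial (EE R j N₃)) ∧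
    (∀ j, Nontrivial (EE R j N₁) → Nontrivial (EE R j N₂) ∨
      ∃ i, i + 1 = j ∧ Nontrivial (EE R i N₃)) ∧
    (∀ j, Nontrivial (EE R j N₃) → Nontrivial (EE R j N₂) ∨ Nontrivial (EE R (j+1) N₁)) := by
  obtain ⟨P⟩ := (inferInstance : HasProjectiveResolution (resFld R)).out
  -- the short complex of Hom-complexes
  have hfg0 : mapCC P.complex f ≫ mapCC P.complex g = 0 := by
    ext i u
    show ((u : P.complex.X i ⟶ N₁) ≫ f) ≫ g = 0
    have : f ≫ g = 0 := by
      ext x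
      exact (hfg (f x)).1 ⟨x, rfl⟩
    exact (Category.assoc (u : P.complex.X i ⟶ N₁) f g).trans ((congrArg _ this).trans (Limits.comp_zero (X := P.complex.X i)))
  set Scc : ShortComplex (HomologicalComplex (ModuleCat.{0} R) (ComplexShape.up ℕ)) :=
    ShortComplex.mk (mapCC P.complex f) (mapCC P.complex g) hfg0 with hScc
  have hdeg : ∀ i : ℕ, (Scc.map (HomologicalComplex.eval _ _ i)).ShortExact := by
    intro i
    have hQ : Module.Projective R (P.complex.X i) := by
      rw [IsProjective.iff_projective]
      have := P.projective i
      rwa [ModuleCat.of_coe]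
    exact hom_ses (P.complex.X i) hQ f g hf hg hfg _
  have hSE : Scc.ShortExact := HomologicalComplex.shortExact_of_degreewise_shortExact _ hdeg
  -- transfer of Nontrivial along the isomorphism `isoExt`
  have ntE : ∀ (j : ℕ) (N : ModuleCat.{0} R),
      Nontrivial (EE R j N) ↔ Nontrivial ((P.complex.linearYonedaObj R N).homology j) := by
    intro j N
    constructor
    · intro h
      obtain ⟨a, b, hab⟩ := h
      have e := P.isoExt (R := R) j N
      refine ⟨e.hom a, e.hom b, fun h' => hab ?_⟩
      have : ∀ x, e.inv (e.hom x) = x := fun x => by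
        rw [← ConcreteCategory.comp_apply, e.hom_inv_id]; rfl
      rw [← this a, h', this b]
    · intro h
      obtain ⟨a, b, hab⟩ := h
      have e := P.isoExt (R := R) j N
      refine ⟨e.inv a, e.inv b, fun h' => hab ?_⟩
      have : ∀ x, e.hom (e.inv x) = x := fun x => by
        rw [← ConcreteCategory.comp_apply, e.inv_hom_id]; rfl
      rw [← this a, h', this b]
  refine ⟨?_, ?_, ?_⟩
  · intro j h2
    rw [ntE] at h2
    rcases exact_nt₂ (hSE.homology_exact₂ j) h2 with h | h
    · exact Or.inl ((ntE j N₁).2 h)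
    · exact Or.inr ((ntE j N₃).2 h)
  · intro j h1
    match j with
    | 0 =>
      rw [ntE] at h1
      haveI : Mono (Scc.f.f 0) := (hdeg 0).mono_f
      haveI hm := HomologicalComplex.mono_homologyMap_of_mono_of_not_rel Scc.f 0
        (fun i hi => by simp [ComplexShape.up] at hi)
      left
      rw [ntE]
      exact nontrivial_of_injective (homologyMap Scc.f 0)
        ((ModuleCat.mono_iff_injective _).1 hm) h1
    | (i+1) =>
      rw [ntE] at h1
      rcases exact_nt₂ (hSE.homology_exact₁ i (i+1) rfl) h1 with h | h
      · exact Or.inr ⟨i, rfl, (ntE i N₃).2 h⟩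
      · exact Or.inl ((ntE (i+1) N₂).2 h)
  · intro j h3
    rw [ntE] at h3
    rcases exact_nt₂ (hSE.homology_exact₃ j (j+1) rfl) h3 with h | h
    · exact Or.inl ((ntE j N₂).2 h)
    · exact Or.inr ((ntE (j+1) N₁).2 h)
lemma nontrivial_of_section {X Y : ModuleCat.{0} R} (u : X ⟶ Y) (v : Y ⟶ X)
    (huv : u ≫ v = 𝟙 X) (h : Nontrivial X) : Nontrivial Y := by
  have key : ∀ x : X, v (u x) = x := fun x =>
    by rw [← ConcreteCategory.comp_apply, huv]; rfl
  obtain ⟨a, b, hab⟩ := h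
  exact ⟨u a, u b, fun h' => hab (by rw [← key a, h', key b])⟩

lemma ee_retract {X Y : ModuleCat.{0} R} (u : X ⟶ Y) (v : Y ⟶ X)
    (huv : u ≫ v = 𝟙 X) (j : ℕ) (h : Nontrivial (EE R j X)) : Nontrivial (EE R j Y) := by
  set F := (Ext R (ModuleCat.{0} R) j).obj (Opposite.op (resFld R)) with hF
  exact nontrivial_of_section (F.map u) (F.map v)
    (by rw [← F.map_comp, huv, F.map_id]) h

lemma ee_sub {N : ModuleCat.{0} R} (hN : Subsingleton N) (j : ℕ) :
    ¬ Nontrivial (EE R j N) := by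
  obtain ⟨P⟩ := (inferInstance : HasProjectiveResolution (resFld R)).out
  intro h
  -- transfer to homology
  have e := P.isoExt (R := R) j N
  have hh : Nontrivial ((P.complex.linearYonedaObj R N).homology j) := by
    obtain ⟨a, b, hab⟩ := h
    refine ⟨e.hom a, e.hom b, fun h' => hab ?_⟩
    have key : ∀ x, e.inv (e.hom x) = x := fun x => by
      rw [← ConcreteCategory.comp_apply, e.hom_inv_id]; rfl
    rw [← key a, h', key b]
  -- homology of a complex with subsingleton components is zero
  have hz : IsZero (((P.complex.linearYonedaObj R N).sc j).X₂) := by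
    have hsub : Subsingleton (P.complex.X j ⟶ N) :=
      ⟨fun a b => ModuleCat.hom_ext (LinearMap.ext fun x => Subsingleton.elim _ _)⟩
    exact @ModuleCat.isZero_of_subsingleton _ _ _ hsub
  have hex : ((P.complex.linearYonedaObj R N).sc j).Exact :=
    ShortComplex.exact_of_isZero_X₂ _ hz
  rw [ShortComplex.exact_iff_isZero_homology] at hex
  have hid : (𝟙 ((P.complex.linearYonedaObj R N).homology j)) = 0 := hex.eq_of_src _ _
  obtain ⟨a, b, hab⟩ := hh
  apply hab
  have key : ∀ x : (P.complex.linearYonedaObj R N).homology j, x = 0 := by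
    intro x
    have := DFunLike.congr_fun (congrArg (fun (w : (P.complex.linearYonedaObj R N).homology j ⟶ (P.complex.linearYonedaObj R N).homology j) => w.hom) hid) x
    simpa using this
  rw [key a, key b]
lemma ee_pow {N : Type} [AddCommGroup N] [Module R N] {a : ℕ} (ha : 0 < a) (j : ℕ) :
    Nontrivial (EE R j (ModuleCat.of R (Fin a → N))) ↔ Nontrivial (EE R j (ModuleCat.of R N)) := by
  induction a with
  | zero => omega
  | succ a ih =>
    constructor
    · intro h
      rcases Nat.eq_zero_or_pos a with rfl | ha'
      · -- a + 1 = 1 : retract (Fin 1 → N) → N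
        refine ee_retract (X := ModuleCat.of R (Fin 1 → N)) (Y := ModuleCat.of R N)
          (ModuleCat.ofHom (LinearMap.proj 0))
          (ModuleCat.ofHom (LinearMap.single R (fun _ : Fin 1 => N) 0)) ?_ j h
        refine ModuleCat.hom_ext (LinearMap.ext fun x => ?_)
        rw [ModuleCat.hom_id, LinearMap.id_apply]
        refine funext fun i => ?_
        rw [Fin.eq_zero i]
        exact Pi.single_eq_same (M := fun _ : Fin (0+1) => N) 0 (x 0)
      · -- SES  0 → N → (Fin (a+1) → N) → (Fin a → N) → 0
        have L := les (ModuleCat.of R N) (ModuleCat.of R (Fin (a+1) → N))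
          (ModuleCat.of R (Fin a → N))
          (ModuleCat.ofHom (LinearMap.single R (fun _ : Fin (a+1) => N) (Fin.last a)))
          (ModuleCat.ofHom (LinearMap.funLeft R N Fin.castSucc))
          (Pi.single_injective (M := fun _ : Fin (a+1) => N) (Fin.last a))
          (LinearMap.funLeft_surjective_of_injective R N _ (Fin.castSucc_injective a))
          (fun y => by
            constructor
            · rintro ⟨x, rfl⟩
              funext i
              exact Pi.single_eq_of_ne (M := fun _ : Fin (a+1) => N)
                (Fin.castSucc_lt_last i).ne x
            · intro hy
              refine ⟨y (Fin.last a), funext fun i => ?_⟩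
              induction i using Fin.lastCases with
              | last => exact Pi.single_eq_same (M := fun _ : Fin (a+1) => N) _ _
              | cast i =>
                exact (Pi.single_eq_of_ne (M := fun _ : Fin (a+1) => N)
                  (Fin.castSucc_lt_last i).ne _).trans (congrFun hy i).symm)
        rcases L.1 j h with h1 | h3
        · exact h1
        · exact (ih ha').1 h3
    · intro h
      refine ee_retract (X := ModuleCat.of R N) (Y := ModuleCat.of R (Fin (a+1) → N))
        (ModuleCat.ofHom (LinearMap.single R (fun _ : Fin (a+1) => N) 0))
        (ModuleCat.ofHom (LinearMap.proj 0)) ?_ j h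
      refine ModuleCat.hom_ext (LinearMap.ext fun x => ?_)
      rw [ModuleCat.hom_id, LinearMap.id_apply]
      exact Pi.single_eq_same (M := fun _ : Fin (a+1) => N) 0 x

lemma syz {n : ℕ} {S M : ModuleCat.{0} R} (hS : IsNthSyzygyOf R n S M) (j : ℕ)
    (h : Nontrivial (EE R j S)) :
    (∃ i, i + n ≤ j ∧ Nontrivial (EE R i M)) ∨
    (∃ i ≤ j, Nontrivial (EE R i (ModuleCat.of R R))) := by
  induction n generalizing S j with
  | zero =>
    obtain ⟨e⟩ := hS
    exact Or.inl ⟨j, by omega, ee_retract e.hom e.inv e.hom_inv_id j h⟩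
  | succ n ih =>
    obtain ⟨T, hT, m, f, g, hf, hg, hfg⟩ := hS
    have L := les S (ModuleCat.of R (Fin m → R)) T f g hf hg hfg
    rcases L.2.1 j h with h2 | ⟨i, hi, h3⟩
    · rcases Nat.eq_zero_or_pos m with rfl | hm
      · exact absurd h2 (ee_sub (by infer_instance) j)
      · exact Or.inr ⟨j, le_rfl, (ee_pow hm j).1 h2⟩
    · rcases ih hT i h3 with ⟨i', hi', hM⟩ | ⟨i', hi', hR⟩
      · exact Or.inl ⟨i', by omega, hM⟩
      · exact Or.inr ⟨i', by omega, hR⟩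
lemma mdepth_le_iff {M : Type} [AddCommGroup M] [Module R M] (j : ℕ) :
    mdepth R M ≤ (j : ℕ∞) ↔ ∃ i ≤ j, Nontrivial (EE R i (ModuleCat.of R M)) := by
  constructor
  · intro h
    by_contra hc
    push_neg at hc
    have hge : ((j : ℕ∞) + 1) ≤ mdepth R M := by
      apply le_sInf
      rintro e ⟨n, rfl, hn⟩
      have : j < n := by
        by_contra hn'
        exact not_nontrivial_iff_subsingleton.2 (hc n (le_of_not_gt hn')) hn
      exact_mod_cast this
    have := le_trans hge h
    simp [ENat.add_one_le_iff] at this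
  · rintro ⟨i, hij, hnt⟩
    exact le_trans (sInf_le ⟨i, rfl, hnt⟩) (by exact_mod_cast hij)

end DepthAux

open Classical in
/-- If `0 → M^{⊕a} → K → (Ωⁿ M)^{⊕b} → 0` is exact with `a, b ≥ 1` and
`depth_R M ≤ depth R`, then `depth_R M = depth_R K`. -/
theorem stmt0
    (R : Type) [CommRing R] [IsNoetherianRing R] [IsLocalRing R]
    (M K S : Type)
    [AddCommGroup M] [Module R M] [Module.Finite R M]
    [AddCommGroup K] [Module R K] [Module.Finite R K]
    [AddCommGroup S] [Module R S] [Module.Finite R S]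
    (a b n : ℕ) (ha : 0 < a) (hb : 0 < b)
    (hS : IsNthSyzygyOf R n (ModuleCat.of R S) (ModuleCat.of R M))
    (f : (Fin a → M) →ₗ[R] K) (g : K →ₗ[R] (Fin b → S))
    (hf : Function.Injective f) (hg : Function.Surjective g)
    (hfg : LinearMap.range f = LinearMap.ker g)
    (hdep : mdepth R M ≤ mdepth R R) :
    mdepth R M = mdepth R K := by
  have L := les (ModuleCat.of R (Fin a → M)) (ModuleCat.of R K)
    (ModuleCat.of R (Fin b → S)) (ModuleCat.ofHom f) (ModuleCat.ofHom g) hf hg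
    (fun y => by
      constructor
      · rintro ⟨x, rfl⟩
        have : f x ∈ LinearMap.ker g := hfg ▸ LinearMap.mem_range_self f x
        exact this
      · intro h
        have : y ∈ LinearMap.ker g := h
        rw [← hfg] at this
        exact this)
  have key : ∀ j : ℕ, Nontrivial (EE R j (ModuleCat.of R K)) →
      ∃ i ≤ j, Nontrivial (EE R i (ModuleCat.of R M)) := by
    intro j h
    rcases L.1 j h with hA | hC
    · exact ⟨j, le_rfl, (ee_pow ha j).1 hA⟩
    · have hCS := (ee_pow hb j).1 hC
      rcases syz hS j hCS with ⟨i, hin, hM⟩ | ⟨i, hij, hR⟩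
      · exact ⟨i, by omega, hM⟩
      · have h1 : mdepth R M ≤ (i : ℕ∞) := le_trans hdep (sInf_le ⟨i, rfl, hR⟩)
        obtain ⟨i', hi', h'⟩ := (mdepth_le_iff i).1 h1
        exact ⟨i', by omega, h'⟩
  by_cases hM : ∃ i : ℕ, Nontrivial (EE R i (ModuleCat.of R M))
  · set d0 := Nat.find hM with hd0
    have hspec : Nontrivial (EE R d0 (ModuleCat.of R M)) := Nat.find_spec hM
    have hmin : ∀ i < d0, ¬ Nontrivial (EE R i (ModuleCat.of R M)) :=
      fun i hi => Nat.find_min hM hi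
    have hMd : mdepth R M = (d0 : ℕ∞) := by
      refine le_antisymm (sInf_le ⟨d0, rfl, hspec⟩) (le_sInf ?_)
      rintro e ⟨i, rfl, hi⟩
      exact_mod_cast Nat.find_min' hM hi
    -- no nontrivial Ext of (Fin b → S) below d0
    have hSb : ∀ i < d0, ¬ Nontrivial (EE R i (ModuleCat.of R (Fin b → S))) := by
      intro i hi hnt
      have hntS := (ee_pow hb i).1 hnt
      rcases syz hS i hntS with ⟨i', hi', hM'⟩ | ⟨i', hi', hR⟩
      · exact hmin i' (by omega) hM'
      · have h1 : mdepth R M ≤ (i' : ℕ∞) := le_trans hdep (sInf_le ⟨i', rfl, hR⟩)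
        obtain ⟨i'', hi'', h''⟩ := (mdepth_le_iff i').1 h1
        exact hmin i'' (by omega) h''
    have hK : Nontrivial (EE R d0 (ModuleCat.of R K)) := by
      have hA : Nontrivial (EE R d0 (ModuleCat.of R (Fin a → M))) := (ee_pow ha d0).2 hspec
      rcases L.2.1 d0 hA with h | ⟨i, hi, h3⟩
      · exact h
      · exact absurd h3 (hSb i (by omega))
    have hKmin : ∀ i < d0, ¬ Nontrivial (EE R i (ModuleCat.of R K)) := by
      intro i hi hnt
      obtain ⟨i', hi', h'⟩ := key i hnt
      exact hmin i' (by omega) h'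
    rw [hMd]
    refine le_antisymm (le_sInf ?_) (sInf_le ⟨d0, rfl, hK⟩)
    rintro e ⟨i, rfl, hi⟩
    have : d0 ≤ i := by
      by_contra h'
      exact hKmin i (by omega) hi
    exact_mod_cast this
  · push_neg at hM
    have h1 : mdepth R M = ⊤ := by
      rw [mdepth, sInf_eq_top]
      rintro e ⟨i, rfl, hi⟩
      exact absurd hi (not_nontrivial_iff_subsingleton.2 (hM i))
    have h2 : mdepth R K = ⊤ := by
      rw [mdepth, sInf_eq_top]
      rintro e ⟨i, rfl, hi⟩
      obtain ⟨i', _, h'⟩ := key i hi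
      exact absurd h' (not_nontrivial_iff_subsingleton.2 (hM i'))
    rw [h1, h2]
end

section
/- Let R be a commutative Noetherian local ring, M and N finitely generated R-modules with q^R(M,N) := sup{i : Tor_i^R(M,N) ≠ 0} < ∞, and let 0 → M^{⊕a} → K → Ω^n M^{⊕b} → 0 be a short exact sequence with a,b ≥ 1, n ≥ 0. Then q^R(M,N) = q^R(K,N). -/
open CategoryTheory

/-- `Tor_i^R(M, N)`. -/
noncomputable def torM (R : Type) [CommRing R] (i : ℕ)
    (M : Type) [AddCommGroup M] [Module R M]
    (N : Type) [AddCommGroup N] [Module R N] : ModuleCat.{0} R :=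
  ((Tor (ModuleCat.{0} R) i).obj (ModuleCat.of R M)).obj (ModuleCat.of R N)
open CategoryTheory.Limits MonoidalCategory

namespace Aux

variable {R : Type} [CommRing R]

variable {NN : ModuleCat.{0} R} (P : ProjectiveResolution NN)

/-- The complex `X ⊗ P•`. -/
noncomputable def tcx (X : ModuleCat.{0} R) :
    HomologicalComplex (ModuleCat.{0} R) (ComplexShape.down ℕ) :=
  (((tensoringLeft (ModuleCat.{0} R)).obj X).mapHomologicalComplex _).obj P.complex

noncomputable def tcxMap {X Y : ModuleCat.{0} R} (f : X ⟶ Y) : tcx P X ⟶ tcx P Y :=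
  (NatTrans.mapHomologicalComplex ((tensoringLeft (ModuleCat.{0} R)).map f) _).app P.complex

lemma tcxMap_comp {X Y Z : ModuleCat.{0} R} (f : X ⟶ Y) (g : Y ⟶ Z) :
    tcxMap P (f ≫ g) = tcxMap P f ≫ tcxMap P g := by
  simp only [tcxMap, Functor.map_comp, NatTrans.mapHomologicalComplex_comp, NatTrans.comp_app]
  rfl

lemma tcxMap_id (X : ModuleCat.{0} R) : tcxMap P (𝟙 X) = 𝟙 (tcx P X) := by
  simp only [tcxMap, CategoryTheory.Functor.map_id, NatTrans.mapHomologicalComplex_id,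
    NatTrans.id_app]
  rfl

lemma tcxMap_f {X Y : ModuleCat.{0} R} (f : X ⟶ Y) (j : ℕ) :
    (tcxMap P f).f j = ModuleCat.ofHom (LinearMap.rTensor (P.complex.X j) f.hom) := rfl

/-- homology at `i` of `X ⊗ P•`. -/
noncomputable abbrev th (i : ℕ) (X : ModuleCat.{0} R) : ModuleCat.{0} R :=
  (tcx P X).homology i

end Aux

namespace Aux2
open Aux

variable {R : Type} [CommRing R]

lemma subsingleton_of_iso {A B : ModuleCat.{0} R} (e : A ≅ B) (h : Subsingleton A) :
    Subsingleton B :=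
  (((forget _).mapIso e).toEquiv.subsingleton_congr).1 h

lemma nontrivial_of_iso {A B : ModuleCat.{0} R} (e : A ≅ B) (h : Nontrivial A) :
    Nontrivial B :=
  letI := h
  ((forget _).mapIso e).toEquiv.symm.nontrivial

variable {NN : ModuleCat.{0} R} (P : ProjectiveResolution NN)

noncomputable def torIso (X : ModuleCat.{0} R) (i : ℕ) :
    ((Tor (ModuleCat.{0} R) i).obj X).obj NN ≅ th P i X :=
  P.isoLeftDerivedObj ((tensoringLeft (ModuleCat.{0} R)).obj X) i

/-- homology iso from a module iso -/
noncomputable abbrev thIso {X Y : ModuleCat.{0} R} (e : X ≅ Y) (i : ℕ) :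
    th P i X ≅ th P i Y where
  hom := HomologicalComplex.homologyMap (tcxMap P e.hom) i
  inv := HomologicalComplex.homologyMap (tcxMap P e.inv) i
  hom_inv_id := by
    rw [← HomologicalComplex.homologyMap_comp, ← tcxMap_comp, e.hom_inv_id, tcxMap_id,
      HomologicalComplex.homologyMap_id]
  inv_hom_id := by
    rw [← HomologicalComplex.homologyMap_comp, ← tcxMap_comp, e.inv_hom_id, tcxMap_id,
      HomologicalComplex.homologyMap_id]

/-- retract gives nontrivial homology -/
lemma th_nontrivial_of_retract {X Y : ModuleCat.{0} R} (f : X ⟶ Y) (r : Y ⟶ X)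
    (hfr : f ≫ r = 𝟙 X) (i : ℕ) [Nontrivial (th P i X)] : Nontrivial (th P i Y) := by
  obtain ⟨x, y, hxy⟩ := ‹Nontrivial (th P i X)›
  have h : HomologicalComplex.homologyMap (tcxMap P f) i ≫
      HomologicalComplex.homologyMap (tcxMap P r) i = 𝟙 _ := by
    rw [← HomologicalComplex.homologyMap_comp, ← tcxMap_comp, hfr, tcxMap_id,
      HomologicalComplex.homologyMap_id]
  refine ⟨HomologicalComplex.homologyMap (tcxMap P f) i x,
    HomologicalComplex.homologyMap (tcxMap P f) i y, fun hc => hxy ?_⟩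
  have := congrArg (HomologicalComplex.homologyMap (tcxMap P r) i) hc
  have h2 : ∀ z, (HomologicalComplex.homologyMap (tcxMap P r) i)
      ((HomologicalComplex.homologyMap (tcxMap P f) i) z) = z := fun z => by
    rw [← CategoryTheory.comp_apply, h, CategoryTheory.id_apply]
  have := congrArg (HomologicalComplex.homologyMap (tcxMap P r) i) hc
  rw [h2, h2] at this
  simpa using this

end Aux2

namespace Aux3
open Aux Aux2 HomologicalComplex

variable {R : Type} [CommRing R] {NN : ModuleCat.{0} R} (P : ProjectiveResolution NN)

lemma subsingleton_of_isZero {A : ModuleCat.{0} R} (h : Limits.IsZero A) : Subsingleton A := by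
  have hz : (𝟙 A : A ⟶ A) = 0 := h.eq_of_src _ _
  refine ⟨fun x y => ?_⟩
  have hx := congrArg (fun φ : A ⟶ A => φ x) hz
  have hy := congrArg (fun φ : A ⟶ A => φ y) hz
  simp only [LinearMap.zero_apply] at hx hy
  calc x = (𝟙 A : A ⟶ A) x := rfl
  _ = (𝟙 A : A ⟶ A) y := by rw [hz]; rfl
  _ = y := rfl

instance flat_res (j : ℕ) : Module.Flat R (P.complex.X j) := by
  have : Module.Projective R (P.complex.X j) :=
    (IsProjective.iff_projective (P.complex.X j)).mpr (inferInstance : Projective (P.complex.X j))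
  infer_instance

variable {A B Cc : ModuleCat.{0} R} (f : A ⟶ B) (g : B ⟶ Cc)

lemma tcx_w (hfg : LinearMap.range f.hom = LinearMap.ker g.hom) :
    tcxMap P f ≫ tcxMap P g = 0 := by
  rw [← tcxMap_comp]
  have : f ≫ g = 0 := by
    apply ModuleCat.hom_ext
    apply LinearMap.ext
    intro x
    have : f.hom x ∈ LinearMap.ker g.hom := hfg ▸ LinearMap.mem_range_self f.hom x
    simpa using this
  rw [this]
  apply HomologicalComplex.hom_ext
  intro j
  rw [tcxMap_f]
  simp [LinearMap.rTensor_zero]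
  rfl

/-- The short complex of complexes `A ⊗ P ⟶ B ⊗ P ⟶ C ⊗ P`. -/
noncomputable def tcxSES (hfg : LinearMap.range f.hom = LinearMap.ker g.hom) :
    ShortComplex (HomologicalComplex (ModuleCat.{0} R) (ComplexShape.down ℕ)) :=
  ShortComplex.mk (tcxMap P f) (tcxMap P g) (tcx_w P f g hfg)

lemma tcxSES_shortExact (hf : Function.Injective f) (hg : Function.Surjective g)
    (hfg : LinearMap.range f.hom = LinearMap.ker g.hom) :
    (tcxSES P f g hfg).ShortExact := by
  apply HomologicalComplex.shortExact_of_degreewise_shortExact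
  intro j
  have hex : Function.Exact (LinearMap.rTensor (P.complex.X j) f.hom)
      (LinearMap.rTensor (P.complex.X j) g.hom) :=
    Module.Flat.rTensor_exact (P.complex.X j) (LinearMap.exact_iff.mpr hfg.symm)
  have hm : Mono ((tcxSES P f g hfg).map
      (HomologicalComplex.eval (ModuleCat.{0} R) (ComplexShape.down ℕ) j)).f := by
    rw [ModuleCat.mono_iff_injective]
    exact Module.Flat.rTensor_preserves_injective_linearMap f.hom hf
  have he : Epi ((tcxSES P f g hfg).map
      (HomologicalComplex.eval (ModuleCat.{0} R) (ComplexShape.down ℕ) j)).g := by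
    rw [ModuleCat.epi_iff_surjective]
    exact LinearMap.rTensor_surjective (P.complex.X j) hg
  exact { exact := by
            rw [ShortComplex.moduleCat_exact_iff_range_eq_ker]
            exact (LinearMap.exact_iff.mp hex).symm,
          mono_f := hm, epi_g := he }

end Aux3

namespace Aux4
open Aux Aux2 Aux3 HomologicalComplex

variable {R : Type} [CommRing R]

lemma sub_X2 {S : ShortComplex (ModuleCat.{0} R)} (hE : S.Exact)
    (h1 : Subsingleton S.X₁) (h3 : Subsingleton S.X₃) : Subsingleton S.X₂ := by
  rw [ShortComplex.moduleCat_exact_iff] at hE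
  refine ⟨fun x y => ?_⟩
  have hx : S.g x = 0 := Subsingleton.elim _ _
  have hy : S.g y = 0 := Subsingleton.elim _ _
  obtain ⟨u, hu⟩ := hE x hx
  obtain ⟨v, hv⟩ := hE y hy
  rw [← hu, ← hv, Subsingleton.elim u v]

lemma injective_g {S : ShortComplex (ModuleCat.{0} R)} (hE : S.Exact)
    (h1 : Subsingleton S.X₁) : Function.Injective S.g := by
  have hr := hE.moduleCat_range_eq_ker
  change Function.Injective S.g.hom
  rw [← LinearMap.ker_eq_bot]
  rw [← hr]
  apply le_antisymm _ bot_le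
  rintro x ⟨u, rfl⟩
  simp [Subsingleton.elim u 0]

lemma nontrivial_of_injective {A B : ModuleCat.{0} R} (φ : A ⟶ B)
    (hφ : Function.Injective φ) [Nontrivial A] : Nontrivial B := by
  obtain ⟨x, y, hxy⟩ := ‹Nontrivial A›
  exact ⟨φ x, φ y, fun hc => hxy (hφ hc)⟩

variable {NN : ModuleCat.{0} R} (P : ProjectiveResolution NN)
variable {A B Cc : ModuleCat.{0} R} (f : A ⟶ B) (g : B ⟶ Cc)
  (hf : Function.Injective f) (hg : Function.Surjective g)
  (hfg : LinearMap.range f.hom = LinearMap.ker g.hom)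

include hf hg hfg in
lemma les_sub_mid (i : ℕ) (h1 : Subsingleton (th P i A)) (h3 : Subsingleton (th P i Cc)) :
    Subsingleton (th P i B) := by
  have hS := tcxSES_shortExact P f g hf hg hfg
  exact sub_X2 (hS.homology_exact₂ i) h1 h3

include hf hg hfg in
lemma les_sub_left (j : ℕ) (hC : Subsingleton (th P (j + 1) Cc))
    (hB : Subsingleton (th P j B)) : Subsingleton (th P j A) := by
  have hS := tcxSES_shortExact P f g hf hg hfg
  exact sub_X2 (hS.homology_exact₁ (j + 1) j rfl) hC hB

include hf hg hfg in
lemma les_nontriv (j : ℕ) (hC : Subsingleton (th P (j + 1) Cc))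
    (hA : Nontrivial (th P j A)) : Nontrivial (th P j B) := by
  have hS := tcxSES_shortExact P f g hf hg hfg
  have := injective_g (hS.homology_exact₁ (j + 1) j rfl) hC
  exact @nontrivial_of_injective R _ _ _
    (HomologicalComplex.homologyMap (tcxMap P f) j) this hA

end Aux4

namespace Aux5
open Aux Aux2 Aux3 Aux4 HomologicalComplex MonoidalCategory

variable {R : Type} [CommRing R] {NN : ModuleCat.{0} R} (P : ProjectiveResolution NN)

lemma th_sub_of_subsingleton (X : ModuleCat.{0} R) [hX : Subsingleton X] (i : ℕ) :
    Subsingleton (th P i X) := by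
  have hz : ∀ j, Limits.IsZero ((tcx P X).X j) := by
    intro j
    have hzz : ∀ z : (X ⊗ P.complex.X j : ModuleCat.{0} R), z = 0 := by
      intro z
      induction z using TensorProduct.induction_on with
      | zero => rfl
      | tmul x y => rw [Subsingleton.elim x 0, TensorProduct.zero_tmul]
      | add u v hu hv => rw [hu, hv, add_zero]
    have : Subsingleton ((tcx P X).X j) := ⟨fun u v => (hzz u).trans (hzz v).symm⟩
    exact ModuleCat.isZero_of_subsingleton _
  have hex : (tcx P X).ExactAt i :=
    ShortComplex.exact_of_isZero_X₂ _ (hz i)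
  exact subsingleton_of_isZero ((HomologicalComplex.exactAt_iff_isZero_homology _ _).mp hex)

/-- `R ⊗ P• ≅ P•`. -/
noncomputable def tcxUnit : tcx P (ModuleCat.of R R) ≅ P.complex :=
  HomologicalComplex.Hom.isoOfComponents (fun j => λ_ (P.complex.X j))
    (fun i j _ => (MonoidalCategory.leftUnitor_naturality (P.complex.d i j)).symm)

lemma th_sub_R (i : ℕ) (hi : 0 < i) : Subsingleton (th P i (ModuleCat.of R R)) := by
  obtain ⟨n, rfl⟩ : ∃ n, i = n + 1 := ⟨i - 1, by omega⟩
  have h1 : Limits.IsZero (P.complex.homology (n + 1)) :=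
    (HomologicalComplex.exactAt_iff_isZero_homology _ _).mp (P.complex_exactAt_succ n)
  have e : th P (n + 1) (ModuleCat.of R R) ≅ P.complex.homology (n + 1) :=
    (HomologicalComplex.homologyFunctor _ _ (n + 1)).mapIso (tcxUnit P)
  exact subsingleton_of_iso e.symm (subsingleton_of_isZero h1)

end Aux5

namespace Aux6
open Aux Aux2 Aux3 Aux4 Aux5 HomologicalComplex

variable {R : Type} [CommRing R]

/-- `x ↦ Fin.snoc x 0` as a linear map. -/
def snocLM (X : Type) [AddCommGroup X] [Module R X] (c : ℕ) :
    (Fin c → X) →ₗ[R] (Fin (c + 1) → X) where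
  toFun x := Fin.snoc x 0
  map_add' x y := by
    ext j
    refine Fin.lastCases ?_ (fun k => ?_) j <;>
      simp [Fin.snoc_castSucc, Fin.snoc_last]
  map_smul' r x := by
    ext j
    refine Fin.lastCases ?_ (fun k => ?_) j <;>
      simp [Fin.snoc_castSucc, Fin.snoc_last]

lemma snocLM_injective (X : Type) [AddCommGroup X] [Module R X] (c : ℕ) :
    Function.Injective (snocLM (R := R) X c) := by
  intro x y hxy
  ext k
  have := congrFun hxy (Fin.castSucc k)
  simpa [snocLM, Fin.snoc_castSucc] using this

lemma proj_surjective (X : Type) [AddCommGroup X] [Module R X] (c : ℕ) :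
    Function.Surjective (LinearMap.proj (R := R) (φ := fun _ : Fin (c + 1) => X) (Fin.last c)) := by
  intro z
  exact ⟨Fin.snoc 0 z, by simp [Fin.snoc_last]⟩

lemma snoc_range_eq_ker (X : Type) [AddCommGroup X] [Module R X] (c : ℕ) :
    LinearMap.range (snocLM (R := R) X c) =
      LinearMap.ker (LinearMap.proj (R := R) (φ := fun _ : Fin (c + 1) => X) (Fin.last c)) := by
  ext v
  simp only [LinearMap.mem_range, LinearMap.mem_ker, LinearMap.proj_apply]
  constructor
  · rintro ⟨x, rfl⟩
    simp [snocLM, Fin.snoc_last]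
  · intro hv
    refine ⟨Fin.init v, ?_⟩
    have := Fin.snoc_init_self v
    simp only [snocLM, LinearMap.coe_mk, AddHom.coe_mk]
    rw [← hv]
    exact this

variable {NN : ModuleCat.{0} R} (P : ProjectiveResolution NN)

lemma th_sub_pow (X : ModuleCat.{0} R) (i : ℕ) (h : Subsingleton (th P i X)) :
    ∀ c, Subsingleton (th P i (ModuleCat.of R (Fin c → X))) := by
  intro c
  induction c with
  | zero => exact th_sub_of_subsingleton P _ _
  | succ c ih =>
      exact les_sub_mid P
        (A := ModuleCat.of R (Fin c → X)) (B := ModuleCat.of R (Fin (c + 1) → X)) (Cc := X)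
        (ModuleCat.ofHom (snocLM X c))
          (ModuleCat.ofHom (LinearMap.proj (R := R) (φ := fun _ : Fin (c + 1) => X) (Fin.last c)))
        (snocLM_injective X c) (proj_surjective X c) (snoc_range_eq_ker X c) i ih h

lemma th_nontriv_pow (X : ModuleCat.{0} R) (i : ℕ) (h : Nontrivial (th P i X))
    (c : ℕ) (hc : 0 < c) : Nontrivial (th P i (ModuleCat.of R (Fin c → X))) := by
  letI := h
  refine th_nontrivial_of_retract P
    (X := X) (Y := ModuleCat.of R (Fin c → X))
    (ModuleCat.ofHom (LinearMap.single R (fun _ : Fin c => X) ⟨0, hc⟩))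
    (ModuleCat.ofHom (LinearMap.proj (⟨0, hc⟩ : Fin c)))
    ?_ i
  apply ModuleCat.hom_ext
  apply LinearMap.ext
  intro x
  simp only [ModuleCat.hom_comp, ModuleCat.hom_ofHom, LinearMap.comp_apply, LinearMap.proj_apply, LinearMap.single_apply,
    Pi.single_eq_same]
  rfl

end Aux6


namespace Aux7
open Aux Aux2 Aux3 Aux4 Aux5 Aux6 HomologicalComplex

variable {R : Type} [CommRing R] {NN : ModuleCat.{0} R} (P : ProjectiveResolution NN)

lemma th_sub_syzygy (q : ℕ) :
    ∀ (n : ℕ) (S' M' : ModuleCat.{0} R), IsNthSyzygyOf R n S' M' →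
      (∀ i, q < i → Subsingleton (th P i M')) →
      ∀ i, 0 < i → q < i + n → Subsingleton (th P i S') := by
  intro n
  induction n with
  | zero =>
      rintro S' M' ⟨e⟩ hM i _ hqi
      exact subsingleton_of_iso (thIso P e.symm i) (hM i (by omega))
  | succ n ih =>
      rintro S' M' ⟨T, hT, m, f, g, hfi, hgs, hiff⟩ hM i hi hqi
      have hrange : LinearMap.range f.hom = LinearMap.ker g.hom := by
        ext y
        simpa using hiff y
      have hB : Subsingleton (th P i (ModuleCat.of R (Fin m → R))) :=
        th_sub_pow P (ModuleCat.of R R) i (th_sub_R P i hi) m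
      have hC : Subsingleton (th P (i + 1) T) :=
        ih T M' hT hM (i + 1) (by omega) (by omega)
      exact les_sub_left P f g hfi hgs hrange i hC hB

end Aux7

open Aux Aux2 Aux3 Aux4 Aux5 Aux6 Aux7 in
/-- If `q = q^R(M,N) = sup{i : Tor_i^R(M,N) ≠ 0} < ∞` and
`0 → M^{⊕a} → K → (Ωⁿ M)^{⊕b} → 0` is exact with `a, b ≥ 1`, then `q^R(M,N) = q^R(K,N)`,
i.e. `q` is also the supremum of `{i : Tor_i^R(K,N) ≠ 0}`. -/
theorem stmt1
    (R : Type) [CommRing R] [IsNoetherianRing R] [IsLocalRing R]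
    (M K S N : Type)
    [AddCommGroup M] [Module R M] [Module.Finite R M]
    [AddCommGroup K] [Module R K] [Module.Finite R K]
    [AddCommGroup S] [Module R S] [Module.Finite R S]
    [AddCommGroup N] [Module R N] [Module.Finite R N]
    (a b n : ℕ) (ha : 0 < a) (hb : 0 < b)
    (hS : IsNthSyzygyOf R n (ModuleCat.of R S) (ModuleCat.of R M))
    (f : (Fin a → M) →ₗ[R] K) (g : K →ₗ[R] (Fin b → S))
    (hf : Function.Injective f) (hg : Function.Surjective g)
    (hfg : LinearMap.range f = LinearMap.ker g)
    (q : ℕ)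
    (hq1 : Nontrivial (torM R q M N))
    (hq2 : ∀ i : ℕ, q < i → Subsingleton (torM R i M N)) :
    Nontrivial (torM R q K N) ∧ ∀ i : ℕ, q < i → Subsingleton (torM R i K N) := by
  let P : ProjectiveResolution (ModuleCat.of R N) := ProjectiveResolution.of _
  have hq1' : Nontrivial (th P q (ModuleCat.of R M)) :=
    nontrivial_of_iso (torIso P _ q) hq1
  have hq2' : ∀ i, q < i → Subsingleton (th P i (ModuleCat.of R M)) :=
    fun i hi => subsingleton_of_iso (torIso P _ i) (hq2 i hi)
  have hsyz : ∀ i, 0 < i → q < i + n → Subsingleton (th P i (ModuleCat.of R S)) :=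
    th_sub_syzygy P q n _ _ hS hq2'
  constructor
  · refine nontrivial_of_iso (torIso P (ModuleCat.of R K) q).symm ?_
    refine les_nontriv P (A := ModuleCat.of R (Fin a → M)) (B := ModuleCat.of R K)
      (Cc := ModuleCat.of R (Fin b → S)) (ModuleCat.ofHom f) (ModuleCat.ofHom g) hf hg hfg q ?_ ?_
    · exact th_sub_pow P (ModuleCat.of R S) (q + 1) (hsyz (q + 1) (by omega) (by omega)) b
    · exact th_nontriv_pow P (ModuleCat.of R M) q hq1' a ha
  · intro i hi
    refine subsingleton_of_iso (torIso P (ModuleCat.of R K) i).symm ?_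
    refine les_sub_mid P (A := ModuleCat.of R (Fin a → M)) (B := ModuleCat.of R K)
      (Cc := ModuleCat.of R (Fin b → S)) (ModuleCat.ofHom f) (ModuleCat.ofHom g) hf hg hfg i ?_ ?_
    · exact th_sub_pow P (ModuleCat.of R M) i (hq2' i hi) a
    · exact th_sub_pow P (ModuleCat.of R S) i (hsyz i (by omega) (by omega)) b
end

section
/- Let R be a commutative Noetherian local ring, M a finitely generated R-module with red-pd_R(M) < ∞, and p a prime ideal of R. Then red-pd_{R_p}(M_p) ≤ red-pd_R(M); in particular the localization M_p has finite reducing projective dimension over R_p. -/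
open CategoryTheory

/-- Finite projective dimension: some `n`-th syzygy of `M` is projective. -/
def HasFinitePd (R : Type) [CommRing R] (M : ModuleCat.{0} R) : Prop :=
  ∃ (n : ℕ) (S : ModuleCat.{0} R), IsNthSyzygyOf R n S M ∧ Module.Projective R S

/-- `RedPdLE R r M`: the reducing projective dimension of `M` is at most `r`, i.e. there is
a reducing pd-sequence `K_0 = M, K_1, …` of length at most `r` ending at a module of finite
projective dimension. -/
inductive RedPdLE (R : Type) [CommRing R] : ℕ → ModuleCat.{0} R → Prop
  | base (r : ℕ) (M : ModuleCat.{0} R) (h : HasFinitePd R M) : RedPdLE R r M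
  | step (r : ℕ) (M K S : ModuleCat.{0} R) (a b n : ℕ) (ha : 0 < a) (hb : 0 < b)
      (hS : IsNthSyzygyOf R n S M)
      (f : ModuleCat.of R (Fin a → M) ⟶ K) (g : K ⟶ ModuleCat.of R (Fin b → S))
      (hf : Function.Injective f) (hg : Function.Surjective g)
      (hfg : ∀ y, (∃ x, f x = y) ↔ g y = 0)
      (hK : RedPdLE R r K) : RedPdLE R (r + 1) M

/-- The reducing projective dimension, with value `⊤` when it is infinite. -/
noncomputable def redPd (R : Type) [CommRing R] (M : ModuleCat.{0} R) : ℕ∞ :=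
  sInf {e : ℕ∞ | ∃ r : ℕ, e = (r : ℕ∞) ∧ RedPdLE R r M}

section Pi
variable {R : Type} [CommRing R] (S : Submonoid R)
variable (M : Type) [AddCommGroup M] [Module R M] (a : ℕ)

/-- The natural map `(Fin a → M) → (Fin a → Mₛ)`. -/
noncomputable def piMkMap : (Fin a → M) →ₗ[R] (Fin a → LocalizedModule S M) :=
  LinearMap.pi fun i => (LocalizedModule.mkLinearMap S M).comp (LinearMap.proj i)

instance piMkMap_isLocalizedModule : IsLocalizedModule S (piMkMap S M a) := by
  constructor
  · intro s
    rw [Module.End.isUnit_iff]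
    have h : ∀ i : Fin a, Function.Bijective fun (z : LocalizedModule S M) => s • z := by
      intro i
      have := (Module.End.isUnit_iff _).mp
        (IsLocalizedModule.map_units (LocalizedModule.mkLinearMap S M) s)
      convert this using 1
      funext z
      rw [Module.algebraMap_end_apply, Submonoid.smul_def]
    constructor
    · intro x y hxy
      funext i
      exact (h i).1 (by simpa [Module.algebraMap_end_apply, Submonoid.smul_def] using congrFun hxy i)
    · intro y
      choose z hz using fun i => (h i).2 (y i)
      exact ⟨z, by funext i; simpa [Module.algebraMap_end_apply, Submonoid.smul_def] using hz i⟩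
  · intro y
    choose ms hms using fun i => IsLocalizedModule.surj S (LocalizedModule.mkLinearMap S M) (y i)
    refine ⟨⟨fun i => ((∏ j ∈ Finset.univ.erase i, (ms j).2 : S) : R) • (ms i).1,
      ∏ j, (ms j).2⟩, ?_⟩
    funext i
    have hprod : (∏ j ∈ Finset.univ.erase i, (ms j).2) * (ms i).2 = ∏ j, (ms j).2 :=
      Finset.prod_erase_mul _ _ (Finset.mem_univ i)
    calc (∏ j, (ms j).2) • y i
        = ((∏ j ∈ Finset.univ.erase i, (ms j).2) * (ms i).2) • y i := by rw [hprod]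
      _ = (∏ j ∈ Finset.univ.erase i, (ms j).2) • ((ms i).2 • y i) := mul_smul _ _ _
      _ = (∏ j ∈ Finset.univ.erase i, (ms j).2) •
            (LocalizedModule.mkLinearMap S M (ms i).1) := by rw [hms i]
      _ = _ := by
          rw [Submonoid.smul_def, ← map_smul]
          rfl
  · intro x y hxy
    choose c hc using fun i =>
      IsLocalizedModule.exists_of_eq (S := S) (f := LocalizedModule.mkLinearMap S M)
        (congrFun hxy i)
    refine ⟨∏ j, c j, ?_⟩
    funext i
    have hprod : (∏ j ∈ Finset.univ.erase i, c j) * c i = ∏ j, c j :=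
      Finset.prod_erase_mul _ _ (Finset.mem_univ i)
    calc (∏ j, c j) • x i = ((∏ j ∈ Finset.univ.erase i, c j) * c i) • x i := by rw [hprod]
      _ = (∏ j ∈ Finset.univ.erase i, c j) • (c i • x i) := mul_smul _ _ _
      _ = (∏ j ∈ Finset.univ.erase i, c j) • (c i • y i) := by
          rw [show c i • x i = c i • y i from hc i]
      _ = ((∏ j ∈ Finset.univ.erase i, c j) * c i) • y i := (mul_smul _ _ _).symm
      _ = (∏ j, c j) • y i := by rw [hprod]

end Pi

section Loc

variable {R : Type} [CommRing R] (S : Submonoid R)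

/-- Extend an `R`-linear equivalence between `Localization S`-modules to a
`Localization S`-linear equivalence. -/
noncomputable def extendEquiv {M N : Type} [AddCommGroup M] [Module R M]
    [Module (Localization S) M] [IsScalarTower R (Localization S) M]
    [AddCommGroup N] [Module R N] [Module (Localization S) N]
    [IsScalarTower R (Localization S) N] (e : M ≃ₗ[R] N) : M ≃ₗ[Localization S] N :=
  LinearEquiv.ofLinear
    (e.toLinearMap.extendScalarsOfIsLocalization S (Localization S))
    (e.symm.toLinearMap.extendScalarsOfIsLocalization S (Localization S))
    (by ext x; simp) (by ext x; simp)

@[simp] lemma extendEquiv_apply {M N : Type} [AddCommGroup M] [Module R M]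
    [Module (Localization S) M] [IsScalarTower R (Localization S) M]
    [AddCommGroup N] [Module R N] [Module (Localization S) N]
    [IsScalarTower R (Localization S) N] (e : M ≃ₗ[R] N) (x : M) :
    extendEquiv S e x = e x := rfl

/-- `(Fin a → M)ₛ ≃ (Fin a → Mₛ)`. -/
noncomputable def piLocEquiv (M : Type) [AddCommGroup M] [Module R M] (a : ℕ) :
    LocalizedModule S (Fin a → M) ≃ₗ[Localization S] (Fin a → LocalizedModule S M) :=
  extendEquiv S (IsLocalizedModule.iso S (piMkMap S M a))

/-- `Rₛ ≃ Localization S` as modules. -/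
noncomputable def rLocEquiv : LocalizedModule S R ≃ₗ[Localization S] Localization S :=
  extendEquiv S (IsLocalizedModule.iso S (Algebra.linearMap R (Localization S)))

/-- Localization of a linear equivalence. -/
noncomputable def locEquiv {M N : Type} [AddCommGroup M] [Module R M]
    [AddCommGroup N] [Module R N] (e : M ≃ₗ[R] N) :
    LocalizedModule S M ≃ₗ[Localization S] LocalizedModule S N :=
  LinearEquiv.ofLinear (LocalizedModule.map S e.toLinearMap)
    (LocalizedModule.map S e.symm.toLinearMap)
    (by
      ext x
      induction x using LocalizedModule.induction_on with
      | h m s => simp [LocalizedModule.map_mk])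
    (by
      ext x
      induction x using LocalizedModule.induction_on with
      | h m s => simp [LocalizedModule.map_mk])

lemma locMap_exact {M N P : Type} [AddCommGroup M] [Module R M]
    [AddCommGroup N] [Module R N] [AddCommGroup P] [Module R P]
    (f : M →ₗ[R] N) (g : N →ₗ[R] P) (h : Function.Exact f g) :
    Function.Exact (LocalizedModule.map S f) (LocalizedModule.map S g) := by
  have h2 := LocalizedModule.map_exact S f g h
  have e1 : ⇑(LocalizedModule.map S f) =
      ⇑(IsLocalizedModule.map S (LocalizedModule.mkLinearMap S M)
        (LocalizedModule.mkLinearMap S N) f) := by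
    funext x
    induction x using LocalizedModule.induction_on with
    | h m s =>
      rw [LocalizedModule.map_mk]
      rw [IsLocalizedModule.map_LocalizedModules]
  have e2 : ⇑(LocalizedModule.map S g) =
      ⇑(IsLocalizedModule.map S (LocalizedModule.mkLinearMap S N)
        (LocalizedModule.mkLinearMap S P) g) := by
    funext x
    induction x using LocalizedModule.induction_on with
    | h m s =>
      rw [LocalizedModule.map_mk]
      rw [IsLocalizedModule.map_LocalizedModules]
  rw [Function.Exact] at h2 ⊢
  simpa [e1, e2] using h2

/-- Localization of a `ModuleCat`. -/
noncomputable abbrev LMod (M : ModuleCat.{0} R) : ModuleCat.{0} (Localization S) :=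
  ModuleCat.of (Localization S) (LocalizedModule S M)

lemma isSyzygyOf_localized {Sy M : ModuleCat.{0} R} (h : IsSyzygyOf R Sy M) :
    IsSyzygyOf (Localization S) (LMod S Sy) (LMod S M) := by
  obtain ⟨m, f, g, hf, hg, hfg⟩ := h
  have hex : Function.Exact (f.hom : Sy →ₗ[R] (Fin m → R)) (g.hom : (Fin m → R) →ₗ[R] M) :=
    fun y => (hfg y).symm
  have hex' := locMap_exact S (f.hom : Sy →ₗ[R] (Fin m → R)) (g.hom : (Fin m → R) →ₗ[R] M) hex
  set e : LocalizedModule S (Fin m → R) ≃ₗ[Localization S] (Fin m → Localization S) :=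
    (piLocEquiv S R m).trans (LinearEquiv.piCongrRight fun _ => rLocEquiv S)
  refine ⟨m, ModuleCat.ofHom (e.toLinearMap ∘ₗ LocalizedModule.map S (f.hom : Sy →ₗ[R] (Fin m → R))),
    ModuleCat.ofHom (LocalizedModule.map S (g.hom : (Fin m → R) →ₗ[R] M) ∘ₗ e.symm.toLinearMap), ?_, ?_, ?_⟩
  · exact e.injective.comp (LocalizedModule.map_injective S _ hf)
  · exact (LocalizedModule.map_surjective S _ hg).comp e.symm.surjective
  · intro y
    constructor
    · rintro ⟨x, rfl⟩
      show LocalizedModule.map S (g.hom : (Fin m → R) →ₗ[R] M)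
        (e.symm (e (LocalizedModule.map S (f.hom : Sy →ₗ[R] (Fin m → R)) x))) = 0
      rw [e.symm_apply_apply]
      exact (hex' _).mpr ⟨x, rfl⟩
    · intro hy
      obtain ⟨x, hx⟩ := (hex' (e.symm y)).mp hy
      refine ⟨x, ?_⟩
      show e (LocalizedModule.map S (f.hom : Sy →ₗ[R] (Fin m → R)) x) = y
      rw [hx]
      exact e.apply_symm_apply y

lemma isNthSyzygyOf_localized {Sy M : ModuleCat.{0} R} (n : ℕ)
    (h : IsNthSyzygyOf R n Sy M) :
    IsNthSyzygyOf (Localization S) n (LMod S Sy) (LMod S M) := by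
  induction n generalizing Sy with
  | zero =>
    obtain ⟨i⟩ := h
    exact ⟨(locEquiv S i.toLinearEquiv).toModuleIso⟩
  | succ n ih =>
    obtain ⟨T, hT, hTS⟩ := h
    exact ⟨LMod S T, ih hT, isSyzygyOf_localized S hTS⟩

lemma hasFinitePd_localized {M : ModuleCat.{0} R} (h : HasFinitePd R M) :
    HasFinitePd (Localization S) (LMod S M) := by
  obtain ⟨n, Sy, h1, h2⟩ := h
  refine ⟨n, LMod S Sy, isNthSyzygyOf_localized S n h1, ?_⟩
  haveI := h2
  show Module.Projective (Localization S) (LocalizedModule S Sy)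
  exact Module.projective_of_isLocalizedModule S (LocalizedModule.mkLinearMap S Sy)

lemma redPdLE_localized {M : ModuleCat.{0} R} {r : ℕ} (h : RedPdLE R r M) :
    RedPdLE (Localization S) r (LMod S M) := by
  induction h with
  | base r M h => exact RedPdLE.base r _ (hasFinitePd_localized S h)
  | step r M K Sy a b n ha hb hS f g hf hg hfg hK ih =>
    have hex : Function.Exact (f.hom : (Fin a → M) →ₗ[R] K) (g.hom : K →ₗ[R] (Fin b → Sy)) :=
      fun y => (hfg y).symm
    have hex' := locMap_exact S (f.hom : (Fin a → M) →ₗ[R] K) (g.hom : K →ₗ[R] (Fin b → Sy)) hex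
    set ea := piLocEquiv S M a
    set eb := piLocEquiv S Sy b
    refine RedPdLE.step r (LMod S M) (LMod S K) (LMod S Sy) a b n ha hb
      (isNthSyzygyOf_localized S n hS)
      (ModuleCat.ofHom (LocalizedModule.map S (f.hom : (Fin a → M) →ₗ[R] K) ∘ₗ ea.symm.toLinearMap))
      (ModuleCat.ofHom (eb.toLinearMap ∘ₗ LocalizedModule.map S (g.hom : K →ₗ[R] (Fin b → Sy))))
      ?_ ?_ ?_ ih
    · exact (LocalizedModule.map_injective S _ hf).comp ea.symm.injective
    · exact eb.surjective.comp (LocalizedModule.map_surjective S _ hg)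
    · intro y
      constructor
      · rintro ⟨x, rfl⟩
        show eb (LocalizedModule.map S (g.hom : K →ₗ[R] (Fin b → Sy))
          (LocalizedModule.map S (f.hom : (Fin a → M) →ₗ[R] K) (ea.symm x))) = 0
        have h0 : LocalizedModule.map S (g.hom : K →ₗ[R] (Fin b → Sy))
            (LocalizedModule.map S (f.hom : (Fin a → M) →ₗ[R] K) (ea.symm x)) = 0 :=
          (hex' _).mpr ⟨ea.symm x, rfl⟩
        rw [h0, map_zero]
      · intro hy
        have h0 : LocalizedModule.map S (g.hom : K →ₗ[R] (Fin b → Sy)) y = 0 := by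
          apply eb.injective
          rw [map_zero]
          exact hy
        obtain ⟨x, hx⟩ := (hex' y).mp h0
        refine ⟨ea x, ?_⟩
        show LocalizedModule.map S (f.hom : (Fin a → M) →ₗ[R] K) (ea.symm (ea x)) = y
        rw [ea.symm_apply_apply]
        exact hx

end Loc

/-- If `M` is a finitely generated module over a Noetherian local ring `R`
with `red-pd_R M < ∞` and `p` is a prime of `R`, then `red-pd_{R_p} M_p ≤ red-pd_R M`; in
particular `M_p` has finite reducing projective dimension over `R_p`. -/
theorem stmt16
    (R : Type) [CommRing R] [IsNoetherianRing R] [IsLocalRing R]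
    (M : Type) [AddCommGroup M] [Module R M] [Module.Finite R M]
    (hred : redPd R (ModuleCat.of R M) ≠ ⊤)
    (p : Ideal R) [p.IsPrime] :
    redPd (Localization.AtPrime p)
        (ModuleCat.of (Localization.AtPrime p) (LocalizedModule p.primeCompl M))
      ≤ redPd R (ModuleCat.of R M) ∧
    redPd (Localization.AtPrime p)
        (ModuleCat.of (Localization.AtPrime p) (LocalizedModule p.primeCompl M)) ≠ ⊤ := by
  set T : Set ℕ := {r : ℕ | RedPdLE R r (ModuleCat.of R M)} with hTdef
  have hT : T.Nonempty := by
    by_contra hemp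
    apply hred
    have : {e : ℕ∞ | ∃ r : ℕ, e = (r : ℕ∞) ∧ RedPdLE R r (ModuleCat.of R M)} = ∅ := by
      ext e
      simp only [Set.mem_setOf_eq, Set.mem_empty_iff_false, iff_false, not_exists]
      rintro r ⟨rfl, hr⟩
      exact hemp ⟨r, hr⟩
    rw [redPd, this, sInf_empty]
  set r₀ := sInf T with hr₀def
  have hr₀ : RedPdLE R r₀ (ModuleCat.of R M) := Nat.sInf_mem hT
  have h1 : (r₀ : ℕ∞) ≤ redPd R (ModuleCat.of R M) := by
    apply le_sInf
    rintro e ⟨r, rfl, hr⟩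
    exact_mod_cast Nat.sInf_le hr
  have hloc : RedPdLE (Localization.AtPrime p) r₀
      (ModuleCat.of (Localization.AtPrime p) (LocalizedModule p.primeCompl M)) :=
    redPdLE_localized p.primeCompl hr₀
  have h2 : redPd (Localization.AtPrime p)
      (ModuleCat.of (Localization.AtPrime p) (LocalizedModule p.primeCompl M)) ≤ (r₀ : ℕ∞) :=
    sInf_le ⟨r₀, rfl, hloc⟩
  exact ⟨h2.trans h1, ne_top_of_le_ne_top (by simp) h2⟩
end
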